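/- arXiv:1503.03318 — 2 statements merged into one kernel-verified Lean document; each statement's English description precedes it below -/
import Mathlib

section
/- Let P be a row-stochastic matrix over finite index sets, let α₁ = min_i max_j P(i,j), and suppose P = Σ_{q=1}^Q β_q M^q is any representation of P as a convex combination of deterministic 0-1 matrices M^q (each having exactly one 1 per row), with β_q ∈ [0,1] and Σ_q β_q = 1. Then max_q β_q ≤ α₁. In particular, the greedy decomposition whose first coefficient is α₁ achieves the maximal possible leading coefficient among all such decompositions. -/
theorem Fintype.exists_eq_one_of_sum_eq_one {ι R : Type*} [Fintype ι] [AddCommMonoidWithOne R]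
    [NeZero (1 : R)] {f : ι → R} (h01 : ∀ i, f i = 0 ∨ f i = 1) (hsum : ∑ i, f i = 1) :
    ∃ i, f i = 1 := by
  obtain ⟨i, -, hi⟩ := Finset.exists_ne_zero_of_sum_ne_zero (hsum ▸ one_ne_zero)
  exact ⟨i, (h01 i).resolve_left hi⟩

theorem le_sum_mul_of_eq_one {ι R : Type*} [Fintype ι] [Semiring R] [PartialOrder R]
    [IsOrderedRing R] {β m : ι → R} (hβ : ∀ q, 0 ≤ β q) (hm : ∀ q, 0 ≤ m q) {q : ι}
    (hq : m q = 1) : β q ≤ ∑ q', β q' * m q' := by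
  simpa [hq] using Finset.single_le_sum (fun q' _ => mul_nonneg (hβ q') (hm q'))
    (Finset.mem_univ q)

theorem convexCombination_coeff_le_min_rowMax_general
    {I J : Type*} [Fintype I] [Fintype J] [Nonempty I] [Nonempty J]
    (P : I → J → ℝ)
    (Q : ℕ) (β : Fin Q → ℝ) (M : Fin Q → I → J → ℝ)
    (hβ : ∀ q, 0 ≤ β q ∧ β q ≤ 1)
    (hM : ∀ q, (∀ i j, M q i j = 0 ∨ M q i j = 1) ∧ ∀ i, ∑ j, M q i j = 1)
    (hdecomp : ∀ i j, P i j = ∑ q, β q * M q i j) :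
    ∀ q, β q ≤ Finset.univ.inf' Finset.univ_nonempty
          (fun i => Finset.univ.sup' Finset.univ_nonempty (P i)) := by
  intro q
  refine Finset.le_inf' _ _ fun i _ => ?_
  obtain ⟨j, hj⟩ := Fintype.exists_eq_one_of_sum_eq_one ((hM q).1 i) ((hM q).2 i)
  have hM_nonneg : ∀ q', 0 ≤ M q' i j := fun q' =>
    ((hM q').1 i j).elim (fun h => h.ge) (fun h => h ▸ zero_le_one)
  calc β q ≤ P i j := hdecomp i j ▸ le_sum_mul_of_eq_one (fun q' => (hβ q').1) hM_nonneg hj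
    _ ≤ Finset.univ.sup' Finset.univ_nonempty (P i) := Finset.le_sup' (P i) (Finset.mem_univ j)

/-- If `P = ∑ q, β q • M q` is any representation of the row-stochastic matrix `P` as a
convex combination of deterministic 0-1 matrices, then every coefficient `β q` is bounded
by `α₁ = min_i max_j P i j`; hence the greedy decomposition, whose leading coefficient is
`α₁`, achieves the maximal possible leading coefficient. -/
theorem convexCombination_coeff_le_min_rowMax
    {I J : Type*} [Fintype I] [Fintype J] [Nonempty I] [Nonempty J]
    (P : I → J → ℝ)
    (h0 : ∀ i j, 0 ≤ P i j) (h1 : ∀ i j, P i j ≤ 1)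
    (hrow : ∀ i, ∑ j, P i j = 1)
    (Q : ℕ) (β : Fin Q → ℝ) (M : Fin Q → I → J → ℝ)
    (hβ : ∀ q, 0 ≤ β q ∧ β q ≤ 1) (hβsum : ∑ q, β q = 1)
    (hM : ∀ q, (∀ i j, M q i j = 0 ∨ M q i j = 1) ∧ ∀ i, ∑ j, M q i j = 1)
    (hdecomp : ∀ i j, P i j = ∑ q, β q * M q i j) :
    ∀ q, β q ≤ Finset.univ.inf' Finset.univ_nonempty
          (fun i => Finset.univ.sup' Finset.univ_nonempty (P i)) :=
  convexCombination_coeff_le_min_rowMax_general P Q β M hβ hM hdecomp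
end

section
/- In the iterative decomposition procedure P⁰ = P, α_m = min_i max_j P^{m−1}(i,j), L^m the argmax indicator matrix of P^{m−1}, P^m = P^{m−1} − α_m L^m, the sequence of coefficients is nonincreasing: α_{m+1} ≤ α_m for all m ≥ 1. -/
/-- The maximum of row `i` of the matrix `P`. -/
noncomputable def rowMax {I J : Type*} [Fintype J] [Nonempty J]
    (P : I → J → ℝ) (i : I) : ℝ :=
  Finset.univ.sup' Finset.univ_nonempty (P i)

open Classical in
/-- The first column index achieving the maximum of row `i` of `P`. -/
noncomputable def argmaxRow {I J : Type*} [Fintype J] [Nonempty J] [LinearOrder J]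
    (P : I → J → ℝ) (i : I) : J :=
  (Finset.univ.filter fun j => P i j = rowMax P i).min' (by
    obtain ⟨b, _, hb⟩ := Finset.exists_mem_eq_sup' (Finset.univ_nonempty) (P i)
    exact ⟨b, Finset.mem_filter.mpr ⟨Finset.mem_univ b, hb.symm⟩⟩)

/-- The greedy coefficient `α = min_i max_j P i j`. -/
noncomputable def alphaCoef {I J : Type*} [Fintype I] [Nonempty I] [Fintype J] [Nonempty J]
    (P : I → J → ℝ) : ℝ :=
  Finset.univ.inf' Finset.univ_nonempty (rowMax P)

/-- The 0-1 matrix with a `1` in row `i` exactly at the first column achieving the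
row maximum of `P`. -/
noncomputable def Lmat {I J : Type*} [Fintype J] [Nonempty J] [LinearOrder J]
    (P : I → J → ℝ) : I → J → ℝ :=
  fun i j => if j = argmaxRow P i then 1 else 0

/-- The iterative greedy decomposition procedure:
`P⁰ = P`, `P^{m+1} = P^m - α(P^m) • L(P^m)`. -/
noncomputable def iterP {I J : Type*} [Fintype I] [Nonempty I]
    [Fintype J] [Nonempty J] [LinearOrder J]
    (P : I → J → ℝ) : ℕ → I → J → ℝ
  | 0 => P
  | m + 1 => fun i j => iterP P m i j - alphaCoef (iterP P m) * Lmat (iterP P m) i j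

/-!
The iterates stay entrywise nonnegative, since in each row only the maximal entry is reduced
and `α` is at most every row maximum. Hence `α ≥ 0`, each step can only decrease entries,
and `α` is monotone in the matrix.
-/

section Greedy

variable {I J : Type*} [Fintype J] [Nonempty J]

lemma rowMax_mono {P Q : I → J → ℝ} {i : I} (h : ∀ j, P i j ≤ Q i j) :
    rowMax P i ≤ rowMax Q i :=
  Finset.sup'_mono_fun fun j _ => h j

lemma apply_argmaxRow [LinearOrder J] (P : I → J → ℝ) (i : I) :
    P i (argmaxRow P i) = rowMax P i := by
  unfold argmaxRow
  exact (Finset.mem_filter.mp <|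
    Finset.min'_mem (Finset.univ.filter fun j => P i j = rowMax P i) _).2

lemma Lmat_nonneg [LinearOrder J] (P : I → J → ℝ) (i : I) (j : J) : 0 ≤ Lmat P i j := by
  unfold Lmat
  split_ifs <;> norm_num

variable [Fintype I] [Nonempty I]

lemma alphaCoef_mono {P Q : I → J → ℝ} (h : ∀ i j, P i j ≤ Q i j) :
    alphaCoef P ≤ alphaCoef Q :=
  Finset.inf'_mono_fun fun i _ => rowMax_mono (h i)

lemma alphaCoef_le_rowMax (P : I → J → ℝ) (i : I) : alphaCoef P ≤ rowMax P i :=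
  Finset.inf'_le _ (Finset.mem_univ i)

lemma alphaCoef_nonneg {P : I → J → ℝ} (h : ∀ i j, 0 ≤ P i j) : 0 ≤ alphaCoef P :=
  Finset.le_inf' _ _ fun i _ =>
    (h i (Classical.arbitrary J)).trans (Finset.le_sup' _ (Finset.mem_univ _))

lemma sub_alphaCoef_mul_Lmat_nonneg [LinearOrder J] {P : I → J → ℝ} (h : ∀ i j, 0 ≤ P i j)
    (i : I) (j : J) : 0 ≤ P i j - alphaCoef P * Lmat P i j := by
  by_cases hj : j = argmaxRow P i
  · subst hj
    simpa [Lmat, apply_argmaxRow] using alphaCoef_le_rowMax P i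
  · simpa [Lmat, hj] using h i j

lemma sub_alphaCoef_mul_Lmat_le [LinearOrder J] {P : I → J → ℝ} (h : ∀ i j, 0 ≤ P i j)
    (i : I) (j : J) : P i j - alphaCoef P * Lmat P i j ≤ P i j :=
  sub_le_self _ (mul_nonneg (alphaCoef_nonneg h) (Lmat_nonneg P i j))

lemma iterP_nonneg [LinearOrder J] {P : I → J → ℝ} (h : ∀ i j, 0 ≤ P i j) :
    ∀ m i j, 0 ≤ iterP P m i j
  | 0 => h
  | m + 1 => sub_alphaCoef_mul_Lmat_nonneg (iterP_nonneg h m)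

end Greedy

theorem alphaCoef_iterP_antitone_general
    {I J : Type*} [Fintype I] [Nonempty I] [Fintype J] [Nonempty J] [LinearOrder J]
    (P : I → J → ℝ)
    (h0 : ∀ i j, 0 ≤ P i j) :
    ∀ m : ℕ, alphaCoef (iterP P (m + 1)) ≤ alphaCoef (iterP P m) := fun m =>
  alphaCoef_mono (sub_alphaCoef_mul_Lmat_le (iterP_nonneg h0 m))

/-- In the iterative decomposition procedure, the sequence of greedy coefficients is
nonincreasing: `α_{m+1} ≤ α_m` for all `m ≥ 1`. -/
theorem alphaCoef_iterP_antitone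
    {I J : Type*} [Fintype I] [Nonempty I] [Fintype J] [Nonempty J] [LinearOrder J]
    (P : I → J → ℝ)
    (h0 : ∀ i j, 0 ≤ P i j) (h1 : ∀ i j, P i j ≤ 1)
    (hrow : ∀ i, ∑ j, P i j = 1) :
    ∀ m : ℕ, alphaCoef (iterP P (m + 1)) ≤ alphaCoef (iterP P m) :=
  alphaCoef_iterP_antitone_general P h0
end
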